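/- For every integer n ≥ 1 and every x, q_n(x) = Σ_{k=0}^{⌊n/2⌋} 4^k · b(n,k) · (x^2 − 1)^k · (2x)^{n−2k}, where b(n,k) is the number of permutations of {1,…,n} with exactly k left peaks. -/

import Mathlib

open Polynomial Finset

/-- The alternating derivative polynomials for tangent: `p 0 = X`,
`p (n+1) = (X^2 - 1) * (p n)'`. -/
noncomputable def p : ℕ → Polynomial ℝ
  | 0 => X
  | n + 1 => (X ^ 2 - 1) * derivative (p n)

/-- The alternating derivative polynomials for secant: `q 0 = 1`,
`q (n+1) = 2(X^2 - 1) * (q n)' + 2X * q n`. -/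
noncomputable def q : ℕ → Polynomial ℝ
  | 0 => 1
  | n + 1 => 2 * (X ^ 2 - 1) * derivative (q n) + 2 * X * q n

/-- The word of a permutation `π` of `{1, …, n}` extended by the boundary
convention `w 0 = w (n+1) = 0`: for `1 ≤ i ≤ n`, `w i = π i` (as a value in
`{1, …, n}`), and `w i = 0` otherwise. -/
def wval (n : ℕ) (π : Equiv.Perm (Fin n)) (i : ℕ) : ℕ :=
  if h : 1 ≤ i ∧ i ≤ n then ((π ⟨i - 1, by omega⟩ : Fin n) : ℕ) + 1 else 0

/-- `b n k` is the number of permutations of `{1, …, n}` with exactly `k` left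
peaks, i.e. indices `i ∈ {1, …, n-1}` with `π (i-1) < π i > π (i+1)`, where
`π 0 = 0`. -/
noncomputable def b (n k : ℕ) : ℕ :=
  Finset.card <| Finset.univ.filter fun π : Equiv.Perm (Fin n) =>
    ((Finset.Icc 1 (n - 1)).filter fun i =>
        wval n π (i - 1) < wval n π i ∧ wval n π (i + 1) < wval n π i).card = k

/-!
Inserting the letter `n + 1` right after position `p ∈ {0, …, n}` of a permutation of
`{1, …, n}` is a bijection `Sₙ × {0, …, n} → Sₙ₊₁`. The new letter kills the left peak at `p`
or at `p + 1` if there is one, and is itself a new left peak unless it is put at the end. Since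
left peaks are never adjacent, a permutation with `k` left peaks has `2k + 1` insertion positions
that keep `k` peaks and `n - 2k` that give `k + 1`. This recurrence for `b` is exactly the one
satisfied by the coefficients of `q n` in the basis `(x² - 1)ᵏ (2x)ᵐ`, on which
`f ↦ 2(x² - 1) f' + 2x f` acts by
`(x² - 1)ᵏ (2x)ᵐ ↦ (2k + 1) (x² - 1)ᵏ (2x)ᵐ⁺¹ + 4m (x² - 1)ᵏ⁺¹ (2x)ᵐ⁻¹`.
-/

def peaks (n : ℕ) (w : ℕ → ℕ) : Finset ℕ :=
  (Icc 1 (n - 1)).filter fun i => w (i - 1) < w i ∧ w (i + 1) < w i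

def insertAfter (w : ℕ → ℕ) (p v : ℕ) (i : ℕ) : ℕ :=
  if i ≤ p then w i else if i = p + 1 then v else w (i - 1)

section Peaks

variable {n : ℕ} {w : ℕ → ℕ}

lemma mem_peaks {i : ℕ} :
    i ∈ peaks n w ↔ 1 ≤ i ∧ i + 1 ≤ n ∧ w (i - 1) < w i ∧ w (i + 1) < w i := by
  simp only [peaks, mem_filter, mem_Icc]
  omega

lemma succ_notMem_peaks {i : ℕ} (hi : i ∈ peaks n w) : i + 1 ∉ peaks n w := by
  rw [mem_peaks] at *
  simp only [add_tsub_cancel_right]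
  omega

lemma card_peaks_le : #(peaks n w) ≤ n / 2 := by
  have := card_le_card_of_injOn (s := peaks n w) (t := range (n / 2)) (fun i => (i - 1) / 2)
    (fun i hi => by have := mem_peaks.1 (mem_coe.1 hi); simp only [coe_range, Set.mem_Iio]; omega)
    (fun i hi j hj hij => by
      have := mem_peaks.1 (mem_coe.1 hi); have := mem_peaks.1 (mem_coe.1 hj)
      have hi' := succ_notMem_peaks (mem_coe.1 hi)
      have hj' := succ_notMem_peaks (mem_coe.1 hj)
      simp only at hij
      rcases lt_trichotomy i j with h | h | h
      · obtain rfl : j = i + 1 := by omega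
        exact absurd hj hi'
      · exact h
      · obtain rfl : i = j + 1 := by omega
        exact absurd hi hj')
  simpa using this

lemma peaks_insertAfter {p v : ℕ} (hp : p ≤ n) (hw : ∀ i, w i < v) :
    peaks (n + 1) (insertAfter w p v) =
      (peaks n w).filter (· < p) ∪ ((peaks n w).filter (p + 1 < ·)).map (addRightEmbedding 1) ∪
        (if p < n then {p + 1} else ∅) := by
  ext i
  rcases i with _ | j
  · split_ifs <;> simp [mem_peaks]
  have := hw (j - 1); have := hw j; have := hw (j + 1); have := hw (j + 1 + 1)
  simp only [mem_union, mem_filter, mem_map, addRightEmbedding_apply, add_left_inj,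
    exists_eq_right, mem_peaks, insertAfter, add_tsub_cancel_right]
  split_ifs <;> simp only [mem_singleton, notMem_empty] <;> grind

lemma card_peaks_insertAfter {p v : ℕ} (hp : p ≤ n) (hw : ∀ i, w i < v) :
    #(peaks (n + 1) (insertAfter w p v)) =
      #(peaks n w) + if p = n ∨ p ∈ peaks n w ∨ p + 1 ∈ peaks n w then 0 else 1 := by
  have hsplit : #(peaks n w) = #((peaks n w).filter (· < p)) +
      #((peaks n w).filter (p + 1 < ·)) + #((peaks n w).filter fun i => i = p ∨ i = p + 1) := by
    rw [card_eq_sum_ones, card_filter, card_filter, card_filter, ← sum_add_distrib,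
      ← sum_add_distrib]
    refine sum_congr rfl fun i _ => ?_
    split_ifs <;> omega
  have hpair : #((peaks n w).filter fun i => i = p ∨ i = p + 1) =
      if p ∈ peaks n w ∨ p + 1 ∈ peaks n w then 1 else 0 := by
    rw [filter_or, filter_eq', filter_eq']
    by_cases hp : p ∈ peaks n w
    · simp [hp, succ_notMem_peaks hp]
    · by_cases hp' : p + 1 ∈ peaks n w <;> simp [hp, hp']
  rw [peaks_insertAfter hp hw, card_union_of_disjoint, card_union_of_disjoint, card_map, hsplit,
    hpair]
  · rcases hp.lt_or_eq with hp | rfl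
    · simp only [hp, hp.ne, if_true, card_singleton, false_or]
      split_ifs <;> omega
    · have : p ∉ peaks p w ∧ p + 1 ∉ peaks p w := by simp only [mem_peaks]; omega
      simp [this]
  · exact disjoint_left.2 fun i hi hi' => by simp at hi hi'; omega
  · split_ifs
    · exact disjoint_singleton_right.2 (by simp)
    · exact disjoint_empty_right _

-- The positions `p` after which inserting a letter larger than all others leaves the number of
-- peaks unchanged.
lemma card_filter_peak_preserving :
    #((range (n + 1)).filter fun p => p = n ∨ p ∈ peaks n w ∨ p + 1 ∈ peaks n w) =
      2 * #(peaks n w) + 1 := by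
  have hbound : ∀ i ∈ peaks n w, 1 ≤ i ∧ i + 1 ≤ n := fun i hi => by
    have := mem_peaks.1 hi; omega
  have hkeep : (range (n + 1)).filter (fun p => p = n ∨ p ∈ peaks n w ∨ p + 1 ∈ peaks n w) =
      insert n (peaks n w ∪ (peaks n w).image (· - 1)) := by
    ext p
    simp only [mem_filter, mem_range, mem_insert, mem_union, mem_image]
    constructor
    · rintro ⟨-, h | h | h⟩
      · exact .inl h
      · exact .inr (.inl h)
      · exact .inr (.inr ⟨p + 1, h, rfl⟩)
    · rintro (rfl | h | ⟨i, hi, rfl⟩)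
      · simp
      · exact ⟨by have := hbound p h; omega, .inr (.inl h)⟩
      · have := hbound i hi
        exact ⟨by omega, .inr (.inr (by rwa [Nat.sub_add_cancel this.1]))⟩
  have himage : #((peaks n w).image (· - 1)) = #(peaks n w) :=
    card_image_of_injOn fun i hi j hj h => by
      have := hbound i hi; have := hbound j hj; omega
  rw [hkeep, card_insert_of_notMem, card_union_of_disjoint, himage]
  · omega
  · refine disjoint_left.2 fun i hi hi' => ?_
    obtain ⟨j, hj, rfl⟩ := mem_image.1 hi'
    exact succ_notMem_peaks hi (by rwa [Nat.sub_add_cancel (hbound j hj).1])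
  · simp only [mem_union, mem_image, not_or, not_exists, not_and]
    exact ⟨fun h => by have := hbound n h; omega, fun i hi _ => by have := hbound i hi; omega⟩

end Peaks

section Perm

variable {n : ℕ}

lemma wval_of_lt {π : Equiv.Perm (Fin n)} {i : ℕ} (hi : n < i) : wval n π i = 0 := by
  simp only [wval]
  rw [dif_neg (by omega)]

lemma wval_add_one (π : Equiv.Perm (Fin n)) (j : Fin n) : wval n π (j + 1) = π j + 1 := by
  simp [wval]

lemma wval_lt (π : Equiv.Perm (Fin n)) (i : ℕ) : wval n π i < n + 1 := by
  unfold wval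
  split_ifs <;> omega

def permInsertMax (σ : Equiv.Perm (Fin n)) (p : Fin (n + 1)) : Equiv.Perm (Fin (n + 1)) :=
  ((finSuccEquiv' p).trans (Equiv.optionCongr σ)).trans (finSuccEquiv' (Fin.last n)).symm

@[simp]
lemma permInsertMax_apply_self (σ : Equiv.Perm (Fin n)) (p : Fin (n + 1)) :
    permInsertMax σ p p = Fin.last n := by
  simp [permInsertMax]

@[simp]
lemma permInsertMax_apply_succAbove (σ : Equiv.Perm (Fin n)) (p : Fin (n + 1)) (i : Fin n) :
    permInsertMax σ p (p.succAbove i) = (σ i).castSucc := by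
  simp [permInsertMax, Fin.succAbove_last]

lemma wval_permInsertMax (σ : Equiv.Perm (Fin n)) (p : Fin (n + 1)) :
    wval (n + 1) (permInsertMax σ p) = insertAfter (wval n σ) p (n + 1) := by
  funext i
  rcases i with _ | j
  · simp [wval, insertAfter]
  by_cases hj : n < j
  · rw [wval_of_lt (by omega), insertAfter, if_neg (by omega), if_neg (by omega),
      add_tsub_cancel_right, wval_of_lt hj]
  obtain ⟨J, rfl⟩ : ∃ J : Fin (n + 1), (J : ℕ) = j := ⟨⟨j, by omega⟩, rfl⟩
  rw [wval_add_one]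
  obtain rfl | ⟨k, rfl⟩ := Fin.eq_self_or_eq_succAbove p J
  · simp [insertAfter]
  rw [permInsertMax_apply_succAbove, Fin.val_castSucc]
  by_cases hk : k.castSucc < p
  · rw [Fin.succAbove_of_castSucc_lt _ _ hk, Fin.val_castSucc, insertAfter,
      if_pos (by rw [Fin.lt_def, Fin.val_castSucc] at hk; omega), wval_add_one]
  · rw [Fin.succAbove_of_le_castSucc _ _ (not_lt.1 hk), Fin.val_succ, insertAfter,
      if_neg (by rw [not_lt, Fin.le_def, Fin.val_castSucc] at hk; omega),
      if_neg (by rw [not_lt, Fin.le_def, Fin.val_castSucc] at hk; omega), add_tsub_cancel_right,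
      wval_add_one]

lemma permInsertMax_bijective :
    Function.Bijective fun x : Equiv.Perm (Fin n) × Fin (n + 1) => permInsertMax x.1 x.2 := by
  refine (Fintype.bijective_iff_injective_and_card _).2 ⟨?_, ?_⟩
  · rintro ⟨σ, p⟩ ⟨τ, q⟩ h
    simp only at h
    obtain rfl : p = q := (permInsertMax τ q).injective <| by
      rw [permInsertMax_apply_self, ← h, permInsertMax_apply_self]
    obtain rfl : σ = τ := Equiv.ext fun i => Fin.castSucc_injective _ <| by
      rw [← permInsertMax_apply_succAbove σ p, h, permInsertMax_apply_succAbove]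
    rfl
  · simp [Fintype.card_perm, Nat.factorial_succ, mul_comm]

lemma card_filter_perm_succ (P : Equiv.Perm (Fin (n + 1)) → Prop) [DecidablePred P] :
    #(univ.filter P) = ∑ σ : Equiv.Perm (Fin n), #(univ.filter fun p => P (permInsertMax σ p)) := by
  simp only [card_filter]
  rw [← Fintype.sum_prod_type']
  exact (Fintype.sum_bijective _ permInsertMax_bijective _ _ fun _ => rfl).symm

end Perm

section LeftPeaks

variable {n : ℕ}

lemma b_eq_card_peaks (n k : ℕ) :
    b n k = #(univ.filter fun π : Equiv.Perm (Fin n) => #(peaks n (wval n π)) = k) := rfl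

lemma b_zero_zero : b 0 0 = 1 := rfl

lemma b_eq_zero_of_lt {k : ℕ} (h : n < 2 * k) : b n k = 0 := by
  rw [b_eq_card_peaks, card_eq_zero, filter_eq_empty_iff]
  intro π _
  have := card_peaks_le (n := n) (w := wval n π)
  omega

lemma card_peaks_permInsertMax (σ : Equiv.Perm (Fin n)) (p : Fin (n + 1)) :
    #(peaks (n + 1) (wval (n + 1) (permInsertMax σ p))) =
      #(peaks n (wval n σ)) +
        if (p : ℕ) = n ∨ (p : ℕ) ∈ peaks n (wval n σ) ∨ (p : ℕ) + 1 ∈ peaks n (wval n σ)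
        then 0 else 1 := by
  rw [wval_permInsertMax]
  exact card_peaks_insertAfter (Nat.lt_succ_iff.1 p.isLt) (wval_lt σ)

lemma card_filter_card_peaks_permInsertMax (σ : Equiv.Perm (Fin n)) (k : ℕ) :
    #(univ.filter fun p : Fin (n + 1) => #(peaks (n + 1) (wval (n + 1) (permInsertMax σ p))) = k) =
      (if #(peaks n (wval n σ)) = k then 2 * k + 1 else 0) +
        if #(peaks n (wval n σ)) + 1 = k then n + 2 - 2 * k else 0 := by
  simp only [card_peaks_permInsertMax]
  set S := peaks n (wval n σ)
  have hkeep : #(univ.filter fun p : Fin (n + 1) => (p : ℕ) = n ∨ (p : ℕ) ∈ S ∨ (p : ℕ) + 1 ∈ S) =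
      2 * #S + 1 := by
    rw [← card_filter_peak_preserving, card_filter, card_filter]
    exact Fin.sum_univ_eq_sum_range (fun p => if p = n ∨ p ∈ S ∨ p + 1 ∈ S then 1 else 0) (n + 1)
  have hsplit := card_filter_add_card_filter_not (s := (univ : Finset (Fin (n + 1))))
    fun p : Fin (n + 1) => (p : ℕ) = n ∨ (p : ℕ) ∈ S ∨ (p : ℕ) + 1 ∈ S
  rw [card_univ, Fintype.card_fin, hkeep] at hsplit
  rcases eq_or_ne #S k with rfl | hk
  · rw [if_pos rfl, if_neg (by omega), add_zero, ← hkeep]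
    congr 1
    exact filter_congr fun p _ => by split_ifs <;> simp_all
  rcases eq_or_ne (#S + 1) k with rfl | hk'
  · rw [if_neg hk, if_pos rfl, zero_add]
    trans #(univ.filter fun p : Fin (n + 1) => ¬((p : ℕ) = n ∨ (p : ℕ) ∈ S ∨ (p : ℕ) + 1 ∈ S))
    · congr 1
      exact filter_congr fun p _ => by split_ifs <;> simp_all
    · omega
  rw [if_neg hk, if_neg hk', card_eq_zero, filter_eq_empty_iff]
  intro p _
  split_ifs <;> omega

lemma b_succ (n k : ℕ) :
    b (n + 1) k = ∑ σ : Equiv.Perm (Fin n),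
      ((if #(peaks n (wval n σ)) = k then 2 * k + 1 else 0) +
        if #(peaks n (wval n σ)) + 1 = k then n + 2 - 2 * k else 0) := by
  rw [b_eq_card_peaks, card_filter_perm_succ]
  exact sum_congr rfl fun σ _ => card_filter_card_peaks_permInsertMax σ k

lemma b_succ_zero (n : ℕ) : b (n + 1) 0 = b n 0 := by
  rw [b_succ, b_eq_card_peaks, card_filter]
  exact sum_congr rfl fun σ _ => by simp

lemma b_succ_succ (n k : ℕ) :
    b (n + 1) (k + 1) = (2 * k + 3) * b n (k + 1) + (n - 2 * k) * b n k := by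
  rw [b_succ, sum_add_distrib, b_eq_card_peaks, b_eq_card_peaks, card_filter, card_filter,
    mul_sum, mul_sum]
  congr 1 <;> exact sum_congr rfl fun σ _ => by split_ifs <;> omega

end LeftPeaks

noncomputable def secantOp : ℝ[X] →ₗ[ℝ] ℝ[X] :=
  LinearMap.mulLeft ℝ (2 * (X ^ 2 - 1)) ∘ₗ derivative + LinearMap.mulLeft ℝ (2 * X)

lemma q_succ (n : ℕ) : q (n + 1) = secantOp (q n) := rfl

noncomputable def gammaMonomial (k m : ℕ) : ℝ[X] := (X ^ 2 - 1) ^ k * (2 * X) ^ m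

lemma secantOp_gammaMonomial (k m : ℕ) :
    secantOp (gammaMonomial k m) =
      (2 * k + 1 : ℝ) • gammaMonomial k (m + 1) + (4 * m : ℝ) • gammaMonomial (k + 1) (m - 1) := by
  simp only [secantOp, gammaMonomial, LinearMap.add_apply, LinearMap.comp_apply,
    LinearMap.mulLeft_apply, Polynomial.smul_eq_C_mul, map_add, map_mul, map_natCast, map_one,
    map_ofNat]
  rcases k with _ | k <;> rcases m with _ | m <;>
    simp only [derivative_mul, derivative_pow, derivative_sub, derivative_X,
      derivative_one, derivative_ofNat, add_tsub_cancel_right, map_natCast, Nat.cast_ofNat,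
      map_ofNat] <;>
    ring

lemma secantOp_smul_gammaMonomial (n k : ℕ) :
    secantOp ((4 ^ k * b n k : ℝ) • gammaMonomial k (n - 2 * k)) =
      ((2 * k + 1) * 4 ^ k * b n k : ℝ) • gammaMonomial k (n + 1 - 2 * k) +
        (4 ^ (k + 1) * (n - 2 * k : ℕ) * b n k : ℝ) •
          gammaMonomial (k + 1) (n + 1 - 2 * (k + 1)) := by
  by_cases h : 2 * k ≤ n
  · rw [map_smul, secantOp_gammaMonomial, smul_add, smul_smul, smul_smul,
      show n - 2 * k + 1 = n + 1 - 2 * k by omega,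
      show n - 2 * k - 1 = n + 1 - 2 * (k + 1) by omega]
    congr 2 <;> push_cast [h] <;> ring
  · simp [b_eq_zero_of_lt (not_le.1 h)]

lemma q_eq_sum_gammaMonomial {n N : ℕ} (hN : n < 2 * N) :
    q n = ∑ k ∈ range N, (4 ^ k * b n k : ℝ) • gammaMonomial k (n - 2 * k) := by
  obtain ⟨M, rfl⟩ : ∃ M, N = M + 1 := ⟨N - 1, by omega⟩
  induction n with
  | zero =>
    rw [sum_range_succ', sum_eq_zero fun k _ => by rw [b_eq_zero_of_lt (by omega)]; simp]
    simp [q, b_zero_zero, gammaMonomial]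
  | succ n ih =>
    set E : ℕ → ℝ[X] := fun k => ((2 * k + 1) * 4 ^ k * b n k : ℝ) • gammaMonomial k (n + 1 - 2 * k)
    set F : ℕ → ℝ[X] := fun k =>
      (4 ^ (k + 1) * (n - 2 * k : ℕ) * b n k : ℝ) • gammaMonomial (k + 1) (n + 1 - 2 * (k + 1))
    have hF : F M = 0 := by simp [F, show n - 2 * M = 0 by omega]
    have hG0 : (4 ^ 0 * b (n + 1) 0 : ℝ) • gammaMonomial 0 (n + 1 - 2 * 0) = E 0 := by
      simp [E, b_succ_zero]
    have hG : ∀ k, (4 ^ (k + 1) * b (n + 1) (k + 1) : ℝ) •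
        gammaMonomial (k + 1) (n + 1 - 2 * (k + 1)) = E (k + 1) + F k := fun k => by
      rw [← add_smul, b_succ_succ]
      congr 1
      push_cast
      ring
    calc q (n + 1) = ∑ k ∈ range (M + 1), (E k + F k) := by
          rw [q_succ, ih (by omega), map_sum]
          exact sum_congr rfl fun k _ => secantOp_smul_gammaMonomial n k
      _ = ∑ k ∈ range (M + 1), E k + ∑ k ∈ range M, F k := by
          rw [sum_add_distrib, sum_range_succ F, hF, add_zero]
      _ = _ := by
          rw [sum_range_succ' E M, sum_range_succ' _ M, hG0]
          simp only [hG, sum_add_distrib]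
          abel

theorem q_eq_gamma_expansion_general (n : ℕ) (x : ℝ) :
    (q n).eval x =
      ∑ k ∈ Finset.range (n / 2 + 1),
        (4 : ℝ) ^ k * (b n k : ℝ) * (x ^ 2 - 1) ^ k * (2 * x) ^ (n - 2 * k) := by
  rw [q_eq_sum_gammaMonomial (N := n / 2 + 1) (by omega), eval_finsetSum]
  refine sum_congr rfl fun k _ => ?_
  simp only [eval_smul, gammaMonomial, eval_mul, eval_pow, eval_sub, eval_X, eval_one, eval_ofNat,
    smul_eq_mul, mul_assoc]

theorem q_eq_gamma_expansion (n : ℕ) (hn : 1 ≤ n) (x : ℝ) :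
    (q n).eval x =
      ∑ k ∈ Finset.range (n / 2 + 1),
        (4 : ℝ) ^ k * (b n k : ℝ) * (x ^ 2 - 1) ^ k * (2 * x) ^ (n - 2 * k) :=
  q_eq_gamma_expansion_general n x
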